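/- S4FPF is not contained in S4.2.1: the Grzegorczyk axiom □(□(p→□p)→p)→p is valid on every finite partial function poset (hence belongs to S4FPF) but is not a theorem of S4.2.1. -/

import Mathlib

namespace MLAR

/-- Modal formulas over a countably infinite set of propositional variables (indexed by ℕ). -/
inductive MF : Type where
  | top : MF
  | var : ℕ → MF
  | and : MF → MF → MF
  | neg : MF → MF
  | dia : MF → MF

namespace MF

/-- □φ := ¬◇¬φ -/
def box (φ : MF) : MF := neg (dia (neg φ))

/-- Material implication, definable classically from ∧ and ¬. -/
def imp (φ ψ : MF) : MF := neg (and φ (neg ψ))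

/-- Uniform substitution. -/
def subst (σ : ℕ → MF) : MF → MF
  | top => top
  | var p => σ p
  | and φ ψ => and (subst σ φ) (subst σ ψ)
  | neg φ => neg (subst σ φ)
  | dia φ => dia (subst σ φ)

/-- Satisfaction of a modal formula at a world of a Kripke model. -/
def Sat {W : Type*} (R : W → W → Prop) (V : ℕ → Set W) : MF → W → Prop
  | top, _ => True
  | var p, w => w ∈ V p
  | and φ ψ, w => Sat R V φ w ∧ Sat R V ψ w
  | neg φ, w => ¬ Sat R V φ w
  | dia φ, w => ∃ v, R w v ∧ Sat R V φ v

end MF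

/-- A boolean evaluation: respects ⊤, ∧, ¬, treating variables and ◇-formulas as atoms. -/
def IsPropEval (v : MF → Prop) : Prop :=
  v MF.top ∧ (∀ φ ψ, v (MF.and φ ψ) ↔ (v φ ∧ v ψ)) ∧ (∀ φ, v (MF.neg φ) ↔ ¬ v φ)

/-- Propositional tautologies. -/
def IsTautology (φ : MF) : Prop := ∀ v, IsPropEval v → v φ

/-- The K-axiom □(p→q)→(□p→□q). -/
def axK : MF := (((MF.var 0).imp (MF.var 1)).box).imp (((MF.var 0).box).imp ((MF.var 1).box))

/-- Normal modal logics. -/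
def IsNormal (L : Set MF) : Prop :=
  (∀ φ, IsTautology φ → φ ∈ L) ∧
  axK ∈ L ∧
  (∀ φ ψ, φ ∈ L → φ.imp ψ ∈ L → ψ ∈ L) ∧
  (∀ φ σ, φ ∈ L → φ.subst σ ∈ L) ∧
  (∀ φ, φ ∈ L → φ.box ∈ L)

/-- The smallest normal modal logic containing Γ. -/
def KPlus (Γ : Set MF) : Set MF := ⋂₀ {L | IsNormal L ∧ Γ ⊆ L}

/-- (T) = p → ◇p -/
def axT : MF := (MF.var 0).imp ((MF.var 0).dia)
/-- (4) = ◇◇p → ◇p -/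
def ax4 : MF := ((MF.var 0).dia.dia).imp ((MF.var 0).dia)
/-- (.2) = ◇□p → □◇p -/
def axDot2 : MF := ((MF.var 0).box.dia).imp ((MF.var 0).dia.box)
/-- (.1) = □◇p → ◇□p -/
def axDot1 : MF := ((MF.var 0).dia.box).imp ((MF.var 0).box.dia)
/-- Grzegorczyk axiom □(□(p→□p)→p)→p -/
def axGrz : MF := ((((MF.var 0).imp ((MF.var 0).box)).box.imp (MF.var 0)).box).imp (MF.var 0)

def S4 : Set MF := KPlus {axT, ax4}
def S4Dot2 : Set MF := KPlus {axT, ax4, axDot2}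
def S4Dot1 : Set MF := KPlus {axT, ax4, axDot1}
def S4Dot2Dot1 : Set MF := KPlus {axT, ax4, axDot2, axDot1}
def Grz : Set MF := KPlus {axGrz}

/-- Transition systems over a set AP of atomic propositions. -/
structure TS (AP : Type) : Type 1 where
  State : Type
  rel : State → State → Prop
  init : Set State
  label : State → Set AP
  nonempty : Nonempty State
  serial : ∀ s, ∃ t, rel s t

/-- `f` witnesses that T₁ is an abstraction of T₂. -/
def IsAbstractionMap {AP : Type} (T₁ T₂ : TS AP) (f : T₂.State → T₁.State) : Prop :=
  Function.Surjective f ∧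
  (∀ s, T₁.label (f s) = T₂.label s) ∧
  (∀ a b, T₁.rel a b ↔ ∃ s t, T₂.rel s t ∧ f s = a ∧ f t = b) ∧
  T₁.init = f '' T₂.init

/-- `Abs T₁ T₂` : T₁ is an abstraction of T₂ (written T₁ ⇝ T₂; T₂ is a refinement of T₁). -/
def Abs {AP : Type} (T₁ T₂ : TS AP) : Prop := ∃ f, IsAbstractionMap T₁ T₂ f

mutual
/-- CTL state formulas. -/
inductive CTLs (AP : Type) : Type where
  | top : CTLs AP
  | atom : AP → CTLs AP
  | and : CTLs AP → CTLs AP → CTLs AP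
  | neg : CTLs AP → CTLs AP
  | ex : CTLp AP → CTLs AP
  | al : CTLp AP → CTLs AP
/-- CTL path formulas. -/
inductive CTLp (AP : Type) : Type where
  | next : CTLs AP → CTLp AP
  | untl : CTLs AP → CTLs AP → CTLp AP
end

/-- Infinite paths of a transition system. -/
def TS.IsPath {AP : Type} (T : TS AP) (π : ℕ → T.State) : Prop := ∀ i, T.rel (π i) (π (i + 1))

mutual
/-- Satisfaction of CTL state formulas at states. -/
def CTLs.Sat {AP : Type} (T : TS AP) : CTLs AP → T.State → Prop
  | .top, _ => True
  | .atom a, s => a ∈ T.label s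
  | .and φ ψ, s => CTLs.Sat T φ s ∧ CTLs.Sat T ψ s
  | .neg φ, s => ¬ CTLs.Sat T φ s
  | .ex φ, s => ∃ π, T.IsPath π ∧ π 0 = s ∧ CTLp.Sat T φ π
  | .al φ, s => ∀ π, T.IsPath π → π 0 = s → CTLp.Sat T φ π
/-- Satisfaction of CTL path formulas on paths. -/
def CTLp.Sat {AP : Type} (T : TS AP) : CTLp AP → (ℕ → T.State) → Prop
  | .next φ, π => CTLs.Sat T φ (π 1)
  | .untl φ ψ, π => ∃ j, CTLs.Sat T ψ (π j) ∧ ∀ i, i < j → CTLs.Sat T φ (π i)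
end

/-- A transition system satisfies a CTL state formula iff all its initial states do. -/
def TS.sat {AP : Type} (T : TS AP) (Φ : CTLs AP) : Prop := ∀ s ∈ T.init, CTLs.Sat T Φ s

/-- Admissible valuations on the class C: each variable denotes a CTL-expressible set. -/
def AdmissibleVal {AP : Type} (C : Set (TS AP)) (V : ℕ → Set {S : TS AP // S ∈ C}) : Prop :=
  ∀ p, ∃ Φ : CTLs AP, ∀ S : {S : TS AP // S ∈ C}, S ∈ V p ↔ (S : TS AP).sat Φ

/-- The refinement accessibility relation ⇝ on the class C. -/
def refRel {AP : Type} (C : Set (TS AP)) :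
    {S : TS AP // S ∈ C} → {S : TS AP // S ∈ C} → Prop :=
  fun S₁ S₂ => Abs S₁.1 S₂.1

/-- Validity of a modal formula at a world of the general frame (C, ⇝, Admiss(CTL)). -/
def ValidAt {AP : Type} (C : Set (TS AP)) (φ : MF) (S : {S : TS AP // S ∈ C}) : Prop :=
  ∀ V, AdmissibleVal C V → MF.Sat (refRel C) V φ S

/-- Validity on the general frame (C, ⇝, Admiss(CTL)). -/
def ValidOn {AP : Type} (C : Set (TS AP)) (φ : MF) : Prop := ∀ S, ValidAt C φ S

/-- The class of all finite abstractions of T. -/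
def FinAbs {AP : Type} (T : TS AP) : Set (TS AP) := {S | Finite S.State ∧ Abs S T}

/-- The class of all abstractions of T. -/
def AllAbs {AP : Type} (T : TS AP) : Set (TS AP) := {S | Abs S T}

/-- MLAR^fin_T. -/
def MLARfin {AP : Type} (T : TS AP) : Set MF := {φ | ValidOn (FinAbs T) φ}
/-- MLAR^all_T. -/
def MLARall {AP : Type} (T : TS AP) : Set MF := {φ | ValidOn (AllAbs T) φ}
set_option linter.dupNamespace false in
/-- MLAR on the class of all transition systems over the fixed countably infinite AP = ℕ. -/
def MLAR : Set MF := {φ | ValidOn (Set.univ : Set (TS ℕ)) φ}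

/-- Finite partial functions {0,…,n−1} ⇀ {0,1}. -/
def FPF (n : ℕ) : Type := Fin n → Option Bool

/-- g ≼ h iff h extends g. -/
def FPFle {n : ℕ} (g h : FPF n) : Prop := ∀ i x, g i = some x → h i = some x

/-- The modal logic of all finite partial function posets. -/
def S4FPF : Set MF := {φ | ∀ n : ℕ, ∀ V : ℕ → Set (FPF n), ∀ w, MF.Sat FPFle V φ w}

/-- Admissible-set algebra of a general Kripke frame:
closed under complements and finite (including empty and binary) unions. -/
def IsGeneralFrameAdmiss {W : Type*} (𝒜 : Set (Set W)) : Prop :=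
  (∅ : Set W) ∈ 𝒜 ∧ (∀ A ∈ 𝒜, Aᶜ ∈ 𝒜) ∧ (∀ A ∈ 𝒜, ∀ B ∈ 𝒜, A ∪ B ∈ 𝒜)

/-- Formulas valid at a world of a general Kripke frame (W, R, 𝒜). -/
def GValidAt {W : Type*} (R : W → W → Prop) (𝒜 : Set (Set W)) (φ : MF) (c : W) : Prop :=
  ∀ V : ℕ → Set W, (∀ p, V p ∈ 𝒜) → MF.Sat R V φ c

/-- A is a pure button at c: □(b→□b) and □◇b hold at c under V(b) = A. -/
def PureButton {W : Type*} (R : W → W → Prop) (c : W) (A : Set W) : Prop :=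
  (∀ d, R c d → d ∈ A → ∀ e, R d e → e ∈ A) ∧ (∀ d, R c d → ∃ e, R d e ∧ e ∈ A)

/-- A is a pure weak button at c: □(b→□b) and ◇b hold at c under V(b) = A. -/
def PureWeakButton {W : Type*} (R : W → W → Prop) (c : W) (A : Set W) : Prop :=
  (∀ d, R c d → d ∈ A → ∀ e, R d e → e ∈ A) ∧ (∃ e, R c e ∧ e ∈ A)

/-- B is a switch at c: □(◇s ∧ ◇¬s) holds at c under V(s) = B. -/
def IsSwitch {W : Type*} (R : W → W → Prop) (c : W) (B : Set W) : Prop :=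
  ∀ d, R c d → (∃ e, R d e ∧ e ∈ B) ∧ (∃ e, R d e ∧ e ∉ B)

/-- C is a B-restricted switch at c:
□(¬B → (◇(s ∧ ¬B) ∧ ◇(¬s ∧ ¬B))) holds at c under V(s) = C. -/
def RestrictedSwitch {W : Type*} (R : W → W → Prop) (c : W) (B C : Set W) : Prop :=
  ∀ d, R c d → d ∉ B →
    (∃ e, R d e ∧ e ∈ C ∧ e ∉ B) ∧ (∃ e, R d e ∧ e ∉ C ∧ e ∉ B)

/-- Independence of unpushed pure buttons A and switches B at c. -/
def Independent {W : Type*} (R : W → W → Prop) (c : W) {n m : ℕ}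
    (A : Fin n → Set W) (B : Fin m → Set W) : Prop :=
  ∀ (I₀ I₁ : Set (Fin n)) (J₀ J₁ : Set (Fin m)), I₀ ⊆ I₁ →
    ∀ d, R c d →
      ((∀ i, i ∈ I₀ ↔ d ∈ A i) ∧ (∀ j, j ∈ J₀ ↔ d ∈ B j)) →
      ∃ e, R d e ∧ (∀ i, i ∈ I₁ ↔ e ∈ A i) ∧ (∀ j, j ∈ J₁ ↔ e ∈ B j)

/-- Independence until B of pure buttons A and B-restricted switches C at c. -/
def IndependentUntil {W : Type*} (R : W → W → Prop) (c : W) (Bb : Set W) {n m : ℕ}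
    (A : Fin n → Set W) (C : Fin m → Set W) : Prop :=
  ∀ (I₀ I₁ : Set (Fin n)) (J₀ J₁ : Set (Fin m)), I₀ ⊆ I₁ →
    ∀ d, R c d →
      ((∀ i, i ∈ I₀ ↔ d ∈ A i) ∧ (∀ j, j ∈ J₀ ↔ d ∈ C j) ∧ d ∉ Bb) →
      ∃ e, R d e ∧ (∀ i, i ∈ I₁ ↔ e ∈ A i) ∧ (∀ j, j ∈ J₁ ↔ e ∈ C j) ∧ e ∉ Bb

/-- (L, Rr) is a decision at c: a pair of mutually exclusive unpushed pure weak buttons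
whose union is an unpushed pure button, with □(¬l ∨ ¬r) and □((◇l ∧ ◇r) ∨ l ∨ r) at c. -/
def Decision {W : Type*} (R : W → W → Prop) (c : W) (L Rr : Set W) : Prop :=
  PureWeakButton R c L ∧ c ∉ L ∧
  PureWeakButton R c Rr ∧ c ∉ Rr ∧
  PureButton R c (L ∪ Rr) ∧ c ∉ L ∪ Rr ∧
  (∀ d, R c d → ¬(d ∈ L ∧ d ∈ Rr)) ∧
  (∀ d, R c d → (((∃ e, R d e ∧ e ∈ L) ∧ (∃ e, R d e ∧ e ∈ Rr)) ∨ d ∈ L ∨ d ∈ Rr))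

/-- Independence of decisions at c. -/
def IndependentDecisions {W : Type*} (R : W → W → Prop) (c : W) {n : ℕ}
    (L Rr : Fin n → Set W) : Prop :=
  ∀ (I₀ I₁ J₀ J₁ : Set (Fin n)), I₀ ⊆ I₁ → J₀ ⊆ J₁ → (∀ i ∈ J₁, i ∉ I₁) →
    ∀ d, R c d →
      ((∀ i, i ∈ I₀ ↔ d ∈ L i) ∧ (∀ i, i ∈ J₀ ↔ d ∈ Rr i)) →
      ∃ e, R d e ∧ (∀ i, i ∈ I₁ ↔ e ∈ L i) ∧ (∀ i, i ∈ J₁ ↔ e ∈ Rr i)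

/-!
Grz holds on every partial order without infinite ascending chains: if `p` failed at some point
above `w`, then at a maximal such point `v` the hypothesis `□(□(p → □p) → p)` yields `u ≥ v` with
`p` and `t ≥ u` without `p`, and antisymmetry forces `t > v`. The finite partial function posets
are such orders. On the other hand S4.2.1 is sound for the frame of a two-point cluster below a
final point, and Grz fails at any point of a proper cluster.
-/

namespace MF

variable {W : Type*} (R : W → W → Prop) (V : ℕ → Set W)

@[simp]
lemma sat_box (φ : MF) (w : W) : Sat R V φ.box w ↔ ∀ v, R w v → Sat R V φ v := by
  simp [box, Sat]

@[simp]
lemma sat_imp (φ ψ : MF) (w : W) : Sat R V (φ.imp ψ) w ↔ (Sat R V φ w → Sat R V ψ w) := by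
  simp [imp, Sat]

lemma sat_subst (σ : ℕ → MF) (φ : MF) (w : W) :
    Sat R V (φ.subst σ) w ↔ Sat R (fun p => {x | Sat R V (σ p) x}) φ w := by
  induction φ generalizing w with
  | top | var => rfl
  | and φ ψ ihφ ihψ => exact and_congr (ihφ w) (ihψ w)
  | neg φ ih => exact not_congr (ih w)
  | dia φ ih => exact exists_congr fun v => and_congr_right' (ih v)

end MF

def frameLogic {W : Type*} (R : W → W → Prop) : Set MF := {φ | ∀ V w, MF.Sat R V φ w}

section FrameLogic

variable {W : Type*} {R : W → W → Prop}

lemma isNormal_frameLogic : IsNormal (frameLogic R) := by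
  refine ⟨fun φ hφ V w => ?_, fun V w => ?_, fun φ ψ hφ hφψ V w => ?_,
    fun φ σ hφ V w => ?_, fun φ hφ V w => ?_⟩
  · exact hφ (fun ψ => MF.Sat R V ψ w) ⟨trivial, fun _ _ => Iff.rfl, fun _ => Iff.rfl⟩
  · simp only [axK, MF.sat_imp, MF.sat_box]
    exact fun hpq hp v hwv => hpq v hwv (hp v hwv)
  · exact (MF.sat_imp R V φ ψ w).mp (hφψ V w) (hφ V w)
  · exact (MF.sat_subst R V σ φ w).mpr (hφ _ w)
  · exact (MF.sat_box R V φ w).mpr fun v _ => hφ V v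

lemma KPlus_subset_frameLogic {Γ : Set MF} (hΓ : Γ ⊆ frameLogic R) : KPlus Γ ⊆ frameLogic R :=
  Set.sInter_subset_of_mem ⟨isNormal_frameLogic, hΓ⟩

lemma axT_mem_frameLogic (hR : ∀ w, R w w) : axT ∈ frameLogic R := by
  intro V w
  simp only [axT, MF.sat_imp, MF.Sat]
  exact fun hw => ⟨w, hR w, hw⟩

lemma ax4_mem_frameLogic (hR : ∀ u v w, R u v → R v w → R u w) : ax4 ∈ frameLogic R := by
  intro V w
  simp only [ax4, MF.sat_imp, MF.Sat]
  rintro ⟨v, hwv, u, hvu, hu⟩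
  exact ⟨u, hR w v u hwv hvu, hu⟩

variable {top : W} (h_le_top : ∀ w, R w top)

include h_le_top in
lemma axDot2_mem_frameLogic : axDot2 ∈ frameLogic R := by
  intro V w
  simp only [axDot2, MF.sat_imp, MF.sat_box, MF.Sat]
  rintro ⟨v, -, hv⟩ d -
  exact ⟨top, h_le_top d, hv top (h_le_top v)⟩

include h_le_top in
lemma axDot1_mem_frameLogic (h_top_le : ∀ w, R top w → w = top) : axDot1 ∈ frameLogic R := by
  intro V w
  simp only [axDot1, MF.sat_imp, MF.sat_box, MF.Sat]
  intro h
  obtain ⟨u, htu, hu⟩ := h top (h_le_top w)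
  obtain rfl := h_top_le u htu
  exact ⟨u, h_le_top w, fun v huv => h_top_le v huv ▸ hu⟩

end FrameLogic

/-- With `p` false only at `w`, the antecedent of Grz holds at `w` because `□(p → □p)` fails there
along `w R v R w`. -/
lemma not_sat_axGrz_of_cluster {W : Type*} {R : W → W → Prop} {v w : W} (hwv : R w v)
    (hvw : R v w) (hne : v ≠ w) : ¬ MF.Sat R (fun _ => {w}ᶜ) axGrz w := by
  simp only [axGrz, MF.sat_imp, MF.sat_box, MF.Sat]
  intro hGrz
  refine hGrz (fun d _ hd hdw => ?_) rfl
  obtain rfl : d = w := hdw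
  exact hd v hwv hne _ hvw rfl

theorem sat_axGrz {α : Type*} [PartialOrder α] [WellFoundedGT α] (V : ℕ → Set α) (w : α) :
    MF.Sat (· ≤ ·) V axGrz w := by
  simp only [axGrz, MF.sat_imp, MF.sat_box, MF.Sat]
  intro hGrz
  suffices ∀ v, w ≤ v → v ∈ V 0 from this w le_rfl
  intro v
  induction v using WellFoundedGT.induction with
  | _ v ih =>
  intro hwv
  by_contra hv
  obtain ⟨u, hvu, hu, t, hut, ht⟩ : ∃ u, v ≤ u ∧ u ∈ V 0 ∧ ∃ t, u ≤ t ∧ t ∉ V 0 := by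
    by_contra! h
    exact hv (hGrz v hwv h)
  have hvt : v < t := (hvu.trans hut).lt_of_ne fun hvt => by
    subst hvt
    exact hv (le_antisymm hvu hut ▸ hu)
  exact ht (ih t hvt (hwv.trans hvt.le))

instance (n : ℕ) : PartialOrder (FPF n) where
  le := FPFle
  le_refl _ _ _ h := h
  le_trans _ _ _ hgh hhk i x hx := hhk i x (hgh i x hx)
  le_antisymm g h hgh hhg := funext fun i => by
    cases hg : g i with
    | some x => exact (hgh i x hg).symm
    | none =>
      cases hh : h i with
      | none => rfl
      | some x => simp [hhg i x hh] at hg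

instance (n : ℕ) : Finite (FPF n) := inferInstanceAs (Finite (Fin n → Option Bool))

lemma axGrz_mem_S4FPF : axGrz ∈ S4FPF := fun _ V w => sat_axGrz V w

def clusterBelowTop : Fin 3 → Fin 3 → Prop := fun x y => y = 2 ∨ (x ≠ 2 ∧ y ≠ 2)

lemma S4Dot2Dot1_subset_frameLogic_clusterBelowTop :
    S4Dot2Dot1 ⊆ frameLogic clusterBelowTop := by
  refine KPlus_subset_frameLogic ?_
  simp only [Set.insert_subset_iff, Set.singleton_subset_iff]
  unfold clusterBelowTop
  exact ⟨axT_mem_frameLogic (by decide), ax4_mem_frameLogic (by decide),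
    axDot2_mem_frameLogic (top := 2) (by decide),
    axDot1_mem_frameLogic (top := 2) (by decide) (by decide)⟩

lemma axGrz_notMem_S4Dot2Dot1 : axGrz ∉ S4Dot2Dot1 := fun h =>
  not_sat_axGrz_of_cluster (R := clusterBelowTop) (v := 1) (w := 0)
    (.inr ⟨by decide, by decide⟩) (.inr ⟨by decide, by decide⟩) (by decide)
    (S4Dot2Dot1_subset_frameLogic_clusterBelowTop h _ 0)

/-- S4FPF is not contained in S4.2.1: the Grzegorczyk axiom belongs to S4FPF
but is not a theorem of S4.2.1. -/
theorem stmt_14 : axGrz ∈ S4FPF ∧ axGrz ∉ S4Dot2Dot1 ∧ ¬ S4FPF ⊆ S4Dot2Dot1 :=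
  ⟨axGrz_mem_S4FPF, axGrz_notMem_S4Dot2Dot1, fun h => axGrz_notMem_S4Dot2Dot1 (h axGrz_mem_S4FPF)⟩

end MLAR
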